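/- arXiv:2511.07406 — 3 statements merged into one kernel-verified Lean document; each statement's English description precedes it below -/
import Mathlib

section
/- Let d ≥ 1, let ŝ ∈ ℝ^d (EuclideanSpace ℝ (Fin d)) be a unit vector, let α ≥ 0, ρ ≥ 0, m > 0 and Δt > 0 be real numbers, let h ∈ ℝ^d, and define b = α • ŝ + (h - ⟪h, ŝ⟫ • ŝ). Let r_t ∈ ℝ^d be the current position and r_B = r_t + ρ • ŝ the target point on the ascent ray of ŝ. If Δt · ‖b‖² ≤ 2 · m · α · ρ, then the Euler update with the bias force does not increase the distance to the target: ‖r_B - (r_t + (Δt / m) • b)‖ ≤ ‖r_B - r_t‖. -/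
open scoped RealInnerProductSpace

/-- Non-increasing distance from the target (Proposition 2): if
`Δt * ‖b‖² ≤ 2 m α ρ`, then the Euler update with the cone-parameterized bias
force does not increase the distance to the target point on the ascent ray. -/
theorem stmt_2 (d : ℕ) (hd : 1 ≤ d) (shat : EuclideanSpace ℝ (Fin d)) (hshat : ‖shat‖ = 1)
    (α ρ m Δt : ℝ) (hα : 0 ≤ α) (hρ : 0 ≤ ρ) (hm : 0 < m) (hΔt : 0 < Δt)
    (h : EuclideanSpace ℝ (Fin d))
    (b : EuclideanSpace ℝ (Fin d)) (hb : b = α • shat + (h - ⟪h, shat⟫ • shat))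
    (r_t r_B : EuclideanSpace ℝ (Fin d)) (hrB : r_B = r_t + ρ • shat)
    (hstep : Δt * ‖b‖ ^ 2 ≤ 2 * m * α * ρ) :
    ‖r_B - (r_t + (Δt / m) • b)‖ ≤ ‖r_B - r_t‖ := by
  set c : ℝ := Δt / m with hc
  have hcpos : 0 < c := div_pos hΔt hm
  have hkey : ⟪shat, b⟫ = α := by
    have hs2 : ⟪shat, shat⟫ = 1 := by
      rw [real_inner_self_eq_norm_sq, hshat]; norm_num
    rw [hb]
    simp [inner_add_right, inner_sub_right, inner_smul_right, hs2, real_inner_comm shat h, hshat]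
  have h1 : r_B - (r_t + c • b) = ρ • shat - c • b := by rw [hrB]; abel
  have h2 : r_B - r_t = ρ • shat := by rw [hrB]; abel
  rw [h1, h2]
  have hsq : ‖ρ • shat - c • b‖ ^ 2 ≤ ‖ρ • shat‖ ^ 2 := by
    rw [norm_sub_sq_real, inner_smul_left, inner_smul_right, hkey]
    have hnb : ‖c • b‖ ^ 2 = c ^ 2 * ‖b‖ ^ 2 := by
      rw [norm_smul]; simp [mul_pow, abs_of_pos hcpos]
    rw [hnb]
    have hdiv : c * ‖b‖ ^ 2 ≤ 2 * α * ρ := by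
      rw [hc, div_mul_eq_mul_div, div_le_iff₀ hm] at *
      nlinarith
    have := mul_le_mul_of_nonneg_left hdiv hcpos.le
    simp only [RCLike.star_def, starRingEnd_apply, star_trivial]
    nlinarith
  have := Real.sqrt_le_sqrt hsq
  rwa [Real.sqrt_sq (norm_nonneg _), Real.sqrt_sq (norm_nonneg _)] at this
end

section
/- Let n ≥ 1 and K ≥ 1, let Σ be an invertible symmetric real n × n matrix, let Δt > 0 be a real number, and let b, b̄, ΔW : Fin K → ℝⁿ be sequences. Let X : Fin (K+1) → ℝⁿ satisfy X_{k+1} = X_k + Δt • Σ.mulVec (b̄ k) + Σ.mulVec (ΔW k) for all k. Define q(v) := ⟪v, ((Σᵀ * Σ)⁻¹).mulVec v⟫. Then ∑_{k=0}^{K-1} [ (1/(2Δt)) · q(X_{k+1} − X_k − Δt • Σ.mulVec (b k)) − (1/(2Δt)) · q(X_{k+1} − X_k) ] = (1/2) · Δt · ∑_{k=0}^{K-1} ‖b k‖² − Δt · ∑_{k=0}^{K-1} ⟪b k, b̄ k⟫ − ∑_{k=0}^{K-1} ⟪b k, ΔW k⟫. -/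
open Matrix

/-!
Each increment `X_{k+1} - X_k` equals `S (Δt b̄_k + ΔW_k)`, and for symmetric invertible `S` the
quadratic form `q` of `(SᵀS)⁻¹ = (S Sᵀ)⁻¹` pulls back along `S` to the squared Euclidean norm.
Each summand is then a difference of two squared norms in the noise coordinates, which expands to
`½ Δt ‖b_k‖² - Δt ⟪b_k, b̄_k⟫ - ⟪b_k, ΔW_k⟫`.
-/

theorem Matrix.mulVec_dotProduct_inv_mul_transpose_mulVec {m R : Type*} [Fintype m]
    [DecidableEq m] [CommRing R] {S : Matrix m m R} (hS : IsUnit S) (w : m → R) :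
    S *ᵥ w ⬝ᵥ (S * Sᵀ)⁻¹ *ᵥ (S *ᵥ w) = w ⬝ᵥ w := by
  have hdet : IsUnit S.det := (isUnit_iff_isUnit_det S).mp hS
  have hgram : Sᵀ * (S * Sᵀ)⁻¹ * S = 1 := by
    rw [mul_inv_rev, ← transpose_nonsing_inv, ← mul_assoc, ← transpose_mul,
      nonsing_inv_mul S hdet, transpose_one, one_mul, nonsing_inv_mul S hdet]
  rw [mulVec_mulVec, ← vecMul_transpose, dotProduct_mulVec, vecMul_vecMul, ← mul_assoc, hgram,
    vecMul_one]

theorem one_div_two_mul_dotProduct_self_sub_smul_sub {𝕜 m : Type*} [Field 𝕜] [CharZero 𝕜]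
    [Fintype m] {t : 𝕜} (ht : t ≠ 0) (b c d : m → 𝕜) :
    1 / (2 * t) * ((t • c + d - t • b) ⬝ᵥ (t • c + d - t • b))
        - 1 / (2 * t) * ((t • c + d) ⬝ᵥ (t • c + d))
      = 1 / 2 * t * (b ⬝ᵥ b) - t * (b ⬝ᵥ c) - b ⬝ᵥ d := by
  simp only [dotProduct_add, add_dotProduct, dotProduct_sub, sub_dotProduct,
    dotProduct_smul, smul_dotProduct, smul_eq_mul, dotProduct_comm c b, dotProduct_comm d b]
  field_simp
  ring

theorem stmt_11_general (n K : ℕ) (S : Matrix (Fin n) (Fin n) ℝ)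
    (hsym : Sᵀ = S) (hinv : IsUnit S) (Δt : ℝ) (hΔt : 0 < Δt)
    (b bbar ΔW : Fin K → Fin n → ℝ) (X : Fin (K + 1) → Fin n → ℝ)
    (hX : ∀ k : Fin K,
      X k.succ = X k.castSucc + Δt • S.mulVec (bbar k) + S.mulVec (ΔW k))
    (q : (Fin n → ℝ) → ℝ) (hq : ∀ v, q v = v ⬝ᵥ ((Sᵀ * S)⁻¹.mulVec v)) :
    ∑ k : Fin K, ((1 / (2 * Δt)) * q (X k.succ - X k.castSucc - Δt • S.mulVec (b k))
        - (1 / (2 * Δt)) * q (X k.succ - X k.castSucc))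
      = (1 / 2) * Δt * ∑ k : Fin K, (b k ⬝ᵥ b k)
        - Δt * ∑ k : Fin K, (b k ⬝ᵥ bbar k)
        - ∑ k : Fin K, (b k ⬝ᵥ ΔW k) := by
  have hq_pullback : ∀ w, q (S *ᵥ w) = w ⬝ᵥ w := fun w => by
    rw [hq, show Sᵀ * S = S * Sᵀ by rw [hsym],
      mulVec_dotProduct_inv_mul_transpose_mulVec hinv]
  have hincrement : ∀ k, X k.succ - X k.castSucc = S *ᵥ (Δt • bbar k + ΔW k) := fun k => by
    rw [hX k, mulVec_add, mulVec_smul]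
    abel
  have hstep : ∀ k, 1 / (2 * Δt) * q (X k.succ - X k.castSucc - Δt • S *ᵥ b k)
      - 1 / (2 * Δt) * q (X k.succ - X k.castSucc)
      = 1 / 2 * Δt * (b k ⬝ᵥ b k) - Δt * (b k ⬝ᵥ bbar k) - b k ⬝ᵥ ΔW k := fun k => by
    rw [hincrement, ← mulVec_smul, ← mulVec_sub, hq_pullback, hq_pullback,
      one_div_two_mul_dotProduct_self_sub_smul_sub hΔt.ne']
  simp only [hstep, Finset.sum_sub_distrib, Finset.mul_sum]

/-- Discretized cross-entropy identity (Proposition 5): summing the single-step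
differences of Gaussian transition log-densities along the discrete trajectory
`X_{k+1} = X_k + Δt S b̄_k + S ΔW_k` yields the discretized Girsanov functional
`½ Δt Σ‖b_k‖² - Δt Σ⟪b_k, b̄_k⟫ - Σ⟪b_k, ΔW_k⟫`, with `q(v) = vᵀ (Sᵀ S)⁻¹ v`
and inner products/squared norms written via the dot product. -/
theorem stmt_11 (n K : ℕ) (hn : 1 ≤ n) (hK : 1 ≤ K) (S : Matrix (Fin n) (Fin n) ℝ)
    (hsym : Sᵀ = S) (hinv : IsUnit S) (Δt : ℝ) (hΔt : 0 < Δt)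
    (b bbar ΔW : Fin K → Fin n → ℝ) (X : Fin (K + 1) → Fin n → ℝ)
    (hX : ∀ k : Fin K,
      X k.succ = X k.castSucc + Δt • S.mulVec (bbar k) + S.mulVec (ΔW k))
    (q : (Fin n → ℝ) → ℝ) (hq : ∀ v, q v = v ⬝ᵥ ((Sᵀ * S)⁻¹.mulVec v)) :
    ∑ k : Fin K, ((1 / (2 * Δt)) * q (X k.succ - X k.castSucc - Δt • S.mulVec (b k))
        - (1 / (2 * Δt)) * q (X k.succ - X k.castSucc))
      = (1 / 2) * Δt * ∑ k : Fin K, (b k ⬝ᵥ b k)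
        - Δt * ∑ k : Fin K, (b k ⬝ᵥ bbar k)
        - ∑ k : Fin K, (b k ⬝ᵥ ΔW k) :=
  stmt_11_general n K S hsym hinv Δt hΔt b bbar ΔW X hX q hq
end

section
/- Let (Ω, 𝓕) be a measurable space and let P*, Q, V be probability measures on Ω that are mutually absolutely continuous (P* ≪ V, V ≪ P*, Q ≪ V, V ≪ Q). Assume the log-likelihood ratio llr P* Q is square-integrable with respect to V. Then the log-variance divergence vanishes if and only if the measures coincide: Var_V[llr P* Q] := ∫ (llr P* Q − ∫ llr P* Q dV)² dV = 0 if and only if P* = Q. -/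
open MeasureTheory Real

namespace MeasureTheory

lemma eq_of_llr_ae_eq_const {Ω : Type*} [MeasurableSpace Ω] {μ ν : Measure Ω}
    [IsProbabilityMeasure μ] [IsProbabilityMeasure ν] (hμν : μ ≪ ν) (hνμ : ν ≪ μ) {c : ℝ}
    (h : ∀ᵐ x ∂ν, llr μ ν x = c) : μ = ν := by
  have hrn : ∀ᵐ x ∂ν, (μ.rnDeriv ν x).toReal = exp c := by
    filter_upwards [exp_llr_of_ac' μ ν hνμ, h] with x hexp hx
    rw [← hexp, hx]
  have hc : exp c = 1 :=
    calc exp c = ∫ x, (μ.rnDeriv ν x).toReal ∂ν := by simp [integral_congr_ae hrn]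
      _ = 1 := by simp [Measure.integral_toReal_rnDeriv hμν]
  rw [← Measure.rnDeriv_eq_one_iff_eq hμν]
  filter_upwards [hrn] with x hx
  exact (ENNReal.toReal_eq_one_iff _).mp (hx.trans hc)

end MeasureTheory

open ProbabilityTheory

/-- Optimality guarantee of the log-variance divergence (Section 4.2): for mutually
absolutely continuous probability measures, `Var_V[log(dP*/dQ)] = 0` iff `P* = Q`. -/
theorem stmt_13 {Ω : Type*} [MeasurableSpace Ω] (Pstar Q V : Measure Ω)
    [IsProbabilityMeasure Pstar] [IsProbabilityMeasure Q] [IsProbabilityMeasure V]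
    (h1 : Pstar ≪ V) (h2 : V ≪ Pstar) (h3 : Q ≪ V) (h4 : V ≪ Q)
    (hsq : MemLp (llr Pstar Q) 2 V) :
    ∫ x, (llr Pstar Q x - ∫ y, llr Pstar Q y ∂V) ^ 2 ∂V = 0 ↔ Pstar = Q := by
  rw [← variance_eq_integral hsq.aemeasurable]
  constructor
  · intro hvar
    have hconst := ae_eq_integral_of_variance_eq_zero hsq hvar
    exact eq_of_llr_ae_eq_const (h1.trans h4) (h3.trans h2) (h3.ae_le hconst)
  · rintro rfl
    rw [variance_congr (h2.ae_le (llr_self Pstar)), variance_zero]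
end
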